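/- Congruence domain relations: a relation r ⊆ D_i × D_j satisfies the congruence bridge-rule condition — for all x, y ∈ D_i and v, w ∈ D_j, if ⟨x,v⟩ ∈ r, ⟨y,v⟩ ∈ r, and ⟨x,w⟩ ∈ r then ⟨y,w⟩ ∈ r — if and only if r is a union of 'blocks': there exist families {A_k} of pairwise disjoint subsets of D_i and {B_k} of pairwise disjoint subsets of D_j such that r = ⋃_k (A_k × B_k). -/
import Mathlib


universe u v

/-- A domain relation satisfies the congruence bridge-rule condition iff it is a union
of rectangles `A_k × B_k` with the `A_k` pairwise disjoint and the `B_k` pairwise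
disjoint. -/
theorem stmt_19 {Di : Type u} {Dj : Type v} (r : Set (Di × Dj)) :
    (∀ (x y : Di) (v w : Dj),
        (x, v) ∈ r → (y, v) ∈ r → (x, w) ∈ r → (y, w) ∈ r) ↔
      ∃ (K : Type (max u v)) (A : K → Set Di) (B : K → Set Dj),
        Pairwise (fun k l => Disjoint (A k) (A l)) ∧
        Pairwise (fun k l => Disjoint (B k) (B l)) ∧
        r = ⋃ k, A k ×ˢ B k := by
  constructor
  · intro h
    -- image of x under r
    set im : Di → Set Dj := fun x => {v | (x, v) ∈ r} with him
    -- key: if images intersect, they are equal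
    have key : ∀ x x' : Di, ∀ v, v ∈ im x → v ∈ im x' → im x = im x' := by
      intro x x' v hv hv'
      ext w
      constructor
      · intro hw; exact h x x' v w hv hv' hw
      · intro hw; exact h x' x v w hv' hv hw
    refine ⟨{p : Set Di × Set Dj // ∃ x v, (x, v) ∈ r ∧ p.1 = {y | im y = im x} ∧ p.2 = im x},
      fun k => k.1.1, fun k => k.1.2, ?_, ?_, ?_⟩
    · -- A pairwise disjoint
      intro k l hkl
      obtain ⟨x, v, hxv, hA1, hB1⟩ := k.2
      obtain ⟨x', v', hxv', hA2, hB2⟩ := l.2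
      rw [Set.disjoint_left]
      intro y hy hy'
      simp only at hy hy'
      rw [hA1] at hy; rw [hA2] at hy'
      apply hkl
      apply Subtype.ext
      have : im x = im x' := by rw [← hy, hy']
      apply Prod.ext
      · rw [hA1, hA2, this]
      · rw [hB1, hB2, this]
    · -- B pairwise disjoint
      intro k l hkl
      obtain ⟨x, v, hxv, hA1, hB1⟩ := k.2
      obtain ⟨x', v', hxv', hA2, hB2⟩ := l.2
      rw [Set.disjoint_left]
      intro w hw hw'
      simp only at hw hw'
      rw [hB1] at hw; rw [hB2] at hw'
      have : im x = im x' := key x x' w hw hw'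
      apply hkl
      apply Subtype.ext
      apply Prod.ext
      · rw [hA1, hA2, this]
      · rw [hB1, hB2, this]
    · -- r equals the union
      ext ⟨x, v⟩
      simp only [Set.mem_iUnion, Set.mem_prod]
      constructor
      · intro hxv
        exact ⟨⟨({y | im y = im x}, im x), x, v, hxv, rfl, rfl⟩, rfl, hxv⟩
      · rintro ⟨⟨⟨Ak, Bk⟩, x', v', hx'v', hA, hB⟩, hxA, hvB⟩
        simp only at hA hB hxA hvB
        rw [hA] at hxA
        rw [hB] at hvB
        have : v ∈ im x := by rw [hxA]; exact hvB
        exact this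
  · rintro ⟨K, A, B, hA, hB, rfl⟩
    intro x y v w hxv hyv hxw
    simp only [Set.mem_iUnion, Set.mem_prod] at *
    obtain ⟨k, hxk, hvk⟩ := hxv
    obtain ⟨l, hyl, hvl⟩ := hyv
    obtain ⟨m, hxm, hwm⟩ := hxw
    have hkl : k = l := by
      by_contra hne
      exact (hB hne).ne_of_mem hvk hvl rfl
    have hkm : k = m := by
      by_contra hne
      exact (hA hne).ne_of_mem hxk hxm rfl
    exact ⟨k, hkl ▸ hyl, hkm ▸ hwm⟩
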